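/- Under the hypotheses of the main theorem (lower and upper solutions (α₁,α₂),(β₁,β₂) of (OP),(PBC); Nagumo-type condition of f,g relative to [α₁⁰,β₁⁰],[α₂⁰,β₂⁰]; f non-increasing in w₀; g non-increasing in z₀), every solution (z,w)∈(C²[0,T])² of the auxiliary problem (AP) with λ=μ=1 and periodic boundary conditions (PBC) satisfies α₁⁰(t)≤z(t)≤β₁⁰(t) and α₂⁰(t)≤w(t)≤β₂⁰(t) for all t∈[0,T]; consequently, the truncations are inactive and (z,w) is also a solution of the original problem (OP),(PBC). -/

import Mathlib

/-- Sup norm of `α` on `[0,T]`: `‖α‖ = max_{t ∈ [0,T]} |α(t)|`. -/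
noncomputable def supNorm (T : ℝ) (α : ℝ → ℝ) : ℝ :=
  sSup ((fun t => |α t|) '' Set.Icc 0 T)

/-- The shift `α⁰ := α − ‖α‖` used for lower solutions. -/
noncomputable def lowShift (T : ℝ) (α : ℝ → ℝ) : ℝ → ℝ :=
  fun t => α t - supNorm T α

/-- The shift `β⁰ := β + ‖β‖` used for upper solutions. -/
noncomputable def upShift (T : ℝ) (β : ℝ → ℝ) : ℝ → ℝ :=
  fun t => β t + supNorm T β

/-- Periodic boundary conditions on `[0,T]`. -/
def PBC (T : ℝ) (z w : ℝ → ℝ) : Prop :=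
  z 0 = z T ∧ deriv z 0 = deriv z T ∧ w 0 = w T ∧ deriv w 0 = deriv w T

/-- `(α₁, α₂)` is a lower solution of the periodic problem. -/
noncomputable def IsLowerSolution (T : ℝ) (f g : ℝ → ℝ → ℝ → ℝ → ℝ → ℝ)
    (α₁ α₂ : ℝ → ℝ) : Prop :=
  ContDiff ℝ 2 α₁ ∧ ContDiff ℝ 2 α₂ ∧
  (∀ t ∈ Set.Icc 0 T, ∀ w₁ : ℝ,
    f t (lowShift T α₁ t) (lowShift T α₂ t) (deriv α₁ t) w₁ ≤ deriv (deriv α₁) t) ∧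
  (∀ t ∈ Set.Icc 0 T, ∀ z₁ : ℝ,
    g t (lowShift T α₁ t) (lowShift T α₂ t) z₁ (deriv α₂ t) ≤ deriv (deriv α₂) t) ∧
  α₁ 0 = α₁ T ∧ α₂ 0 = α₂ T ∧
  deriv α₁ T ≤ deriv α₁ 0 ∧ deriv α₂ T ≤ deriv α₂ 0

/-- `(β₁, β₂)` is an upper solution of the periodic problem. -/
noncomputable def IsUpperSolution (T : ℝ) (f g : ℝ → ℝ → ℝ → ℝ → ℝ → ℝ)
    (β₁ β₂ : ℝ → ℝ) : Prop :=
  ContDiff ℝ 2 β₁ ∧ ContDiff ℝ 2 β₂ ∧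
  (∀ t ∈ Set.Icc 0 T, ∀ w₁ : ℝ,
    deriv (deriv β₁) t ≤ f t (upShift T β₁ t) (upShift T β₂ t) (deriv β₁ t) w₁) ∧
  (∀ t ∈ Set.Icc 0 T, ∀ z₁ : ℝ,
    deriv (deriv β₂) t ≤ g t (upShift T β₁ t) (upShift T β₂ t) z₁ (deriv β₂ t)) ∧
  β₁ 0 = β₁ T ∧ β₂ 0 = β₂ T ∧
  deriv β₁ 0 ≤ deriv β₁ T ∧ deriv β₂ 0 ≤ deriv β₂ T

/-- The Nagumo-type condition for `f, g` relative to the intervals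
`[γ₁(t), Γ₁(t)]` and `[γ₂(t), Γ₂(t)]`, with Nagumo functions `φ, ψ`. -/
def NagumoCondition (T : ℝ) (f g : ℝ → ℝ → ℝ → ℝ → ℝ → ℝ)
    (γ₁ Γ₁ γ₂ Γ₂ : ℝ → ℝ) (φ ψ : ℝ → ℝ) : Prop :=
  ContinuousOn φ (Set.Ici 0) ∧ ContinuousOn ψ (Set.Ici 0) ∧
  (∀ s ∈ Set.Ici (0:ℝ), 0 < φ s) ∧ (∀ s ∈ Set.Ici (0:ℝ), 0 < ψ s) ∧
  (∫⁻ s in Set.Ici (0:ℝ), ENNReal.ofReal (1 / φ s)) = ⊤ ∧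
  (∫⁻ s in Set.Ici (0:ℝ), ENNReal.ofReal (1 / ψ s)) = ⊤ ∧
  (∀ t ∈ Set.Icc 0 T, ∀ z₀ w₀ z₁ w₁ : ℝ,
    γ₁ t ≤ z₀ → z₀ ≤ Γ₁ t → γ₂ t ≤ w₀ → w₀ ≤ Γ₂ t →
    |f t z₀ w₀ z₁ w₁| ≤ φ |z₁| ∧ |g t z₀ w₀ z₁ w₁| ≤ ψ |w₁|)

/-- The truncation operator `δ` associated with lower bound `lo` and upper
bound `hi`. -/
noncomputable def trunc (lo hi : ℝ → ℝ) (t x : ℝ) : ℝ :=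
  if hi t < x then hi t else if x < lo t then lo t else x

/-- `(z,w)` is a solution of the truncated, perturbed, homotopic auxiliary
problem (AP) with parameters `lam, mu`, associated with lower solutions
`(α₁, α₂)` and upper solutions `(β₁, β₂)`. -/
noncomputable def IsAPSolution (T : ℝ) (f g : ℝ → ℝ → ℝ → ℝ → ℝ → ℝ)
    (α₁ α₂ β₁ β₂ : ℝ → ℝ) (lam mu : ℝ) (z w : ℝ → ℝ) : Prop :=
  ContDiff ℝ 2 z ∧ ContDiff ℝ 2 w ∧
  (∀ t ∈ Set.Icc 0 T,
    deriv (deriv z) t - z t =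
      lam * f t (trunc (lowShift T α₁) (upShift T β₁) t (z t))
                (trunc (lowShift T α₂) (upShift T β₂) t (w t))
                (deriv z t) (deriv w t)
        - lam * trunc (lowShift T α₁) (upShift T β₁) t (z t)) ∧
  (∀ t ∈ Set.Icc 0 T,
    deriv (deriv w) t - w t =
      mu * g t (trunc (lowShift T α₁) (upShift T β₁) t (z t))
               (trunc (lowShift T α₂) (upShift T β₂) t (w t))
               (deriv z t) (deriv w t)
        - mu * trunc (lowShift T α₂) (upShift T β₂) t (w t))


open Set

section Aux

lemma derivFacts {u : ℝ → ℝ} (h : ContDiff ℝ 2 u) :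
    Differentiable ℝ u ∧ Differentiable ℝ (deriv u) ∧ Continuous (deriv (deriv u)) := by
  have h' : ContDiff ℝ (1 + 1) u := by exact_mod_cast h
  rw [contDiff_succ_iff_deriv] at h'
  obtain ⟨h1, -, h2⟩ := h'
  rw [contDiff_one_iff_deriv] at h2
  exact ⟨h1, h2.1, h2.2⟩

lemma abs_le_supNorm {T : ℝ} {α : ℝ → ℝ} (hα : Continuous α) {t : ℝ}
    (ht : t ∈ Set.Icc 0 T) : |α t| ≤ supNorm T α :=
  le_csSup ((isCompact_Icc.image_of_continuousOn hα.abs.continuousOn)).bddAbove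
    (Set.mem_image_of_mem _ ht)

lemma lowShift_nonpos {T : ℝ} {α : ℝ → ℝ} (hα : Continuous α) {t : ℝ}
    (ht : t ∈ Set.Icc 0 T) : lowShift T α t ≤ 0 := by
  have := abs_le_supNorm hα ht
  have := le_abs_self (α t)
  simp only [lowShift]; linarith

lemma upShift_nonneg {T : ℝ} {β : ℝ → ℝ} (hβ : Continuous β) {t : ℝ}
    (ht : t ∈ Set.Icc 0 T) : 0 ≤ upShift T β t := by
  have := abs_le_supNorm hβ ht
  have := neg_abs_le (β t)
  simp only [upShift]; linarith

lemma trunc_le {lo hi : ℝ → ℝ} {t : ℝ} (x : ℝ) (h : lo t ≤ hi t) :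
    trunc lo hi t x ≤ hi t := by
  unfold trunc
  split_ifs with h1 h2
  · exact le_refl _
  · exact h
  · exact not_lt.mp h1

lemma le_trunc {lo hi : ℝ → ℝ} {t : ℝ} (x : ℝ) (h : lo t ≤ hi t) :
    lo t ≤ trunc lo hi t x := by
  unfold trunc
  split_ifs with h1 h2
  · exact h
  · exact le_refl _
  · exact not_lt.mp h2

lemma trunc_of_gt {lo hi : ℝ → ℝ} {t x : ℝ} (h : hi t < x) :
    trunc lo hi t x = hi t := if_pos h

lemma trunc_of_lt {lo hi : ℝ → ℝ} {t x : ℝ} (hlh : lo t ≤ hi t) (h : x < lo t) :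
    trunc lo hi t x = lo t := by
  unfold trunc
  rw [if_neg (by push_neg; exact le_of_lt (lt_of_lt_of_le h hlh)), if_pos h]

lemma trunc_of_mem {lo hi : ℝ → ℝ} {t x : ℝ} (h1 : lo t ≤ x) (h2 : x ≤ hi t) :
    trunc lo hi t x = x := by
  unfold trunc
  rw [if_neg (not_lt.mpr h2), if_neg (not_lt.mpr h1)]

lemma mem_bounds_of_cont {T : ℝ} {h : ℝ → ℝ} (hc : Continuous h) {t : ℝ}
    (ht : t ∈ Set.Icc 0 T) :
    sInf (h '' Set.Icc 0 T) ≤ h t ∧ h t ≤ sSup (h '' Set.Icc 0 T) :=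
  ⟨csInf_le (isCompact_Icc.image_of_continuousOn hc.continuousOn).bddBelow ⟨t, ht, rfl⟩,
   le_csSup (isCompact_Icc.image_of_continuousOn hc.continuousOn).bddAbove ⟨t, ht, rfl⟩⟩

/-- The key maximum principle. -/
lemma maxPrinciple {T : ℝ} (hT : 0 < T) {v : ℝ → ℝ} (hv : ContDiff ℝ 2 v)
    (hper : v 0 = v T) (hper' : deriv v T ≤ deriv v 0)
    (hineq : ∀ t ∈ Set.Icc 0 T, 0 < v t → deriv v t = 0 → v t ≤ deriv (deriv v) t) :
    ∀ t ∈ Set.Icc 0 T, v t ≤ 0 := by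
  obtain ⟨hdiff, hdiff', hddc⟩ := derivFacts hv
  have hvc : Continuous v := hv.continuous
  by_contra hc
  push_neg at hc
  obtain ⟨s, hs, hvs⟩ := hc
  obtain ⟨t₀, ht₀, hmax⟩ := isCompact_Icc.exists_isMaxOn
    (⟨0, by simp [hT.le]⟩ : (Set.Icc (0:ℝ) T).Nonempty) hvc.continuousOn
  have hmaxiff := isMaxOn_iff.mp hmax
  -- choose a max point t₁ < T
  obtain ⟨t₁, ht₁, ht₁T, hmax₁⟩ :
      ∃ t₁ ∈ Set.Icc 0 T, t₁ < T ∧ IsMaxOn v (Set.Icc 0 T) t₁ := by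
    rcases eq_or_lt_of_le ht₀.2 with h | h
    · refine ⟨0, by simp [hT.le], hT, isMaxOn_iff.mpr fun x hx => ?_⟩
      rw [hper, ← h]
      exact hmaxiff x hx
    · exact ⟨t₀, ht₀, h, hmax⟩
  have hmax₁iff := isMaxOn_iff.mp hmax₁
  have hM : 0 < v t₁ := lt_of_lt_of_le hvs (hmax₁iff s hs)
  -- derivative vanishes at t₁
  have hd0 : deriv v t₁ = 0 := by
    rcases eq_or_lt_of_le ht₁.1 with h0 | h0
    · -- t₁ = 0 : use one-sided derivatives and periodicity
      subst h0
      have hmaxT : IsMaxOn v (Set.Icc 0 T) T := isMaxOn_iff.mpr fun x hx => by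
        rw [← hper]; exact hmax₁iff x hx
      have hcone0 : T ∈ posTangentConeAt (Set.Icc (0:ℝ) T) 0 := by
        have := sub_mem_posTangentConeAt_of_segment_subset
          (x := (0:ℝ)) (y := T) (s := Set.Icc 0 T) (by rw [segment_eq_Icc hT.le])
        simpa using this
      have hconeT : -T ∈ posTangentConeAt (Set.Icc (0:ℝ) T) T := by
        have := sub_mem_posTangentConeAt_of_segment_subset
          (x := T) (y := (0:ℝ)) (s := Set.Icc 0 T)
          (by rw [segment_symm, segment_eq_Icc hT.le])
        simpa using this
      have hfd0 : HasFDerivWithinAt v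
          ((1 : ℝ →L[ℝ] ℝ).smulRight (deriv v 0)) (Set.Icc 0 T) 0 :=
        ((hdiff 0).hasDerivAt).hasFDerivAt.hasFDerivWithinAt
      have hfdT : HasFDerivWithinAt v
          ((1 : ℝ →L[ℝ] ℝ).smulRight (deriv v T)) (Set.Icc 0 T) T :=
        ((hdiff T).hasDerivAt).hasFDerivAt.hasFDerivWithinAt
      have h1 := hmax₁.localize.hasFDerivWithinAt_nonpos hfd0 hcone0
      have h2 := hmaxT.localize.hasFDerivWithinAt_nonpos hfdT hconeT
      simp only [ContinuousLinearMap.smulRight_apply, ContinuousLinearMap.one_apply,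
        smul_eq_mul] at h1 h2
      have hd0le : deriv v 0 ≤ 0 := by nlinarith
      have hdTge : 0 ≤ deriv v T := by nlinarith
      linarith
    · -- interior
      exact ((hmax₁.isLocalMax (Icc_mem_nhds h0 ht₁T))).deriv_eq_zero
  -- second derivative is positive at t₁, hence v increases to the right: contradiction
  have hDpos₁ : 0 < deriv (deriv v) t₁ := lt_of_lt_of_le hM (hineq t₁ ht₁ hM hd0)
  have hev : ∀ᶠ x in nhds t₁, 0 < deriv (deriv v) x :=
    (hddc.tendsto t₁).eventually (eventually_gt_nhds hDpos₁)
  obtain ⟨ε, hε, hball⟩ := Metric.eventually_nhds_iff.mp hev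
  set b := min (t₁ + ε / 2) T with hb
  have htb : t₁ < b := lt_min (by linarith) ht₁T
  have hDpos : ∀ x ∈ Set.Icc t₁ b, 0 < deriv (deriv v) x := by
    intro x hx
    apply hball
    rw [Real.dist_eq, abs_lt]
    have hble : b ≤ t₁ + ε / 2 := min_le_left _ _
    constructor
    · linarith [hx.1]
    · linarith [hx.2]
  have hmono' : StrictMonoOn (deriv v) (Set.Icc t₁ b) :=
    strictMonoOn_of_deriv_pos (convex_Icc _ _) hdiff'.continuous.continuousOn
      (fun x hx => hDpos x (by rw [interior_Icc] at hx; exact ⟨hx.1.le, hx.2.le⟩))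
  have hd'pos : ∀ x ∈ Set.Ioo t₁ b, 0 < deriv v x := by
    intro x hx
    have := hmono' (left_mem_Icc.mpr htb.le) ⟨hx.1.le, hx.2.le⟩ hx.1
    rwa [hd0] at this
  have hmono : StrictMonoOn v (Set.Icc t₁ b) :=
    strictMonoOn_of_deriv_pos (convex_Icc _ _) hvc.continuousOn
      (fun x hx => hd'pos x (by rwa [interior_Icc] at hx))
  have hlt : v t₁ < v b :=
    hmono (left_mem_Icc.mpr htb.le) (right_mem_Icc.mpr htb.le) htb
  have hbmem : b ∈ Set.Icc 0 T := ⟨le_trans ht₁.1 htb.le, min_le_right _ _⟩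
  exact absurd (hmax₁iff b hbmem) (not_le.mpr hlt)

end Aux

/-- Claim 4: under the hypotheses of the main theorem, every solution of the
auxiliary problem (AP) with `λ = μ = 1` and periodic boundary conditions stays
between the shifted lower and upper solutions, and hence is also a solution of
the original problem (OP),(PBC). -/
theorem stmt_7
    (T : ℝ) (hT : 0 < T)
    (f g : ℝ → ℝ → ℝ → ℝ → ℝ → ℝ)
    (hf : ContinuousOn (fun p : ℝ × ℝ × ℝ × ℝ × ℝ =>
      f p.1 p.2.1 p.2.2.1 p.2.2.2.1 p.2.2.2.2)
      (Set.Icc 0 T ×ˢ (Set.univ : Set (ℝ × ℝ × ℝ × ℝ))))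
    (hg : ContinuousOn (fun p : ℝ × ℝ × ℝ × ℝ × ℝ =>
      g p.1 p.2.1 p.2.2.1 p.2.2.2.1 p.2.2.2.2)
      (Set.Icc 0 T ×ˢ (Set.univ : Set (ℝ × ℝ × ℝ × ℝ))))
    (α₁ α₂ β₁ β₂ : ℝ → ℝ)
    (hlow : IsLowerSolution T f g α₁ α₂)
    (hupp : IsUpperSolution T f g β₁ β₂)
    (φ ψ : ℝ → ℝ)
    (hNag : NagumoCondition T f g (lowShift T α₁) (upShift T β₁)
      (lowShift T α₂) (upShift T β₂) φ ψ)
    (hfmono : ∀ t ∈ Set.Icc 0 T, ∀ z₀ z₁ w₁ : ℝ,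
      min (sInf (deriv α₁ '' Set.Icc 0 T)) (sInf (deriv β₁ '' Set.Icc 0 T)) ≤ z₁ →
      z₁ ≤ max (sSup (deriv α₁ '' Set.Icc 0 T)) (sSup (deriv β₁ '' Set.Icc 0 T)) →
      ∀ w₀ w₀' : ℝ, w₀ ≤ w₀' → f t z₀ w₀' z₁ w₁ ≤ f t z₀ w₀ z₁ w₁)
    (hgmono : ∀ t ∈ Set.Icc 0 T, ∀ w₀ z₁ w₁ : ℝ,
      min (sInf (deriv α₂ '' Set.Icc 0 T)) (sInf (deriv β₂ '' Set.Icc 0 T)) ≤ w₁ →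
      w₁ ≤ max (sSup (deriv α₂ '' Set.Icc 0 T)) (sSup (deriv β₂ '' Set.Icc 0 T)) →
      ∀ z₀ z₀' : ℝ, z₀ ≤ z₀' → g t z₀' w₀ z₁ w₁ ≤ g t z₀ w₀ z₁ w₁)
    :
    ∀ z w : ℝ → ℝ, IsAPSolution T f g α₁ α₂ β₁ β₂ 1 1 z w → PBC T z w →
      (∀ t ∈ Set.Icc 0 T,
        lowShift T α₁ t ≤ z t ∧ z t ≤ upShift T β₁ t ∧
        lowShift T α₂ t ≤ w t ∧ w t ≤ upShift T β₂ t) ∧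
      (∀ t ∈ Set.Icc 0 T,
        deriv (deriv z) t = f t (z t) (w t) (deriv z t) (deriv w t)) ∧
      (∀ t ∈ Set.Icc 0 T,
        deriv (deriv w) t = g t (z t) (w t) (deriv z t) (deriv w t)) := by
  obtain ⟨hα₁C, hα₂C, hlf, hlg, hα₁per, hα₂per, hα₁d, hα₂d⟩ := hlow
  obtain ⟨hβ₁C, hβ₂C, huf, hug, hβ₁per, hβ₂per, hβ₁d, hβ₂d⟩ := hupp
  obtain ⟨hα₁1, hα₁2, -⟩ := derivFacts hα₁C
  obtain ⟨hα₂1, hα₂2, -⟩ := derivFacts hα₂C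
  obtain ⟨hβ₁1, hβ₁2, -⟩ := derivFacts hβ₁C
  obtain ⟨hβ₂1, hβ₂2, -⟩ := derivFacts hβ₂C
  intro z w hsol hpbc
  obtain ⟨hzC, hwC, heqz, heqw⟩ := hsol
  obtain ⟨hz0, hz'0, hw0, hw'0⟩ := hpbc
  obtain ⟨hz1, hz2, -⟩ := derivFacts hzC
  obtain ⟨hw1, hw2, -⟩ := derivFacts hwC
  have hord₁ : ∀ t ∈ Set.Icc 0 T, lowShift T α₁ t ≤ upShift T β₁ t := fun t ht =>
    le_trans (lowShift_nonpos hα₁C.continuous ht) (upShift_nonneg hβ₁C.continuous ht)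
  have hord₂ : ∀ t ∈ Set.Icc 0 T, lowShift T α₂ t ≤ upShift T β₂ t := fun t ht =>
    le_trans (lowShift_nonpos hα₂C.continuous ht) (upShift_nonneg hβ₂C.continuous ht)
  -- Bound 1 : z ≤ β₁⁰
  have hub₁ : ∀ t ∈ Set.Icc 0 T, z t ≤ upShift T β₁ t := by
    have hvC : ContDiff ℝ 2 (fun t => z t - upShift T β₁ t) :=
      hzC.sub (show ContDiff ℝ 2 fun t => β₁ t + supNorm T β₁ from hβ₁C.add contDiff_const)
    have hdv : deriv (fun t => z t - upShift T β₁ t) = fun t => deriv z t - deriv β₁ t := by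
      funext t
      rw [show (fun t => z t - upShift T β₁ t) = fun t => z t - (β₁ t + supNorm T β₁) from rfl,
        deriv_fun_sub (hz1 t) ((hβ₁1 t).add_const _), deriv_add_const]
    have hddv : ∀ t, deriv (deriv (fun t => z t - upShift T β₁ t)) t =
        deriv (deriv z) t - deriv (deriv β₁) t := by
      intro t
      rw [hdv, deriv_fun_sub (hz2 t) (hβ₁2 t)]
    have hper1 : (fun t => z t - upShift T β₁ t) 0 = (fun t => z t - upShift T β₁ t) T := by
      simp only [upShift]; rw [hz0, hβ₁per]
    have hper2 : deriv (fun t => z t - upShift T β₁ t) T ≤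
        deriv (fun t => z t - upShift T β₁ t) 0 := by
      rw [hdv]; simp only; linarith
    have hin : ∀ t ∈ Set.Icc 0 T, 0 < (fun t => z t - upShift T β₁ t) t →
        deriv (fun t => z t - upShift T β₁ t) t = 0 →
        (fun t => z t - upShift T β₁ t) t ≤
          deriv (deriv (fun t => z t - upShift T β₁ t)) t := by
      intro t ht hpos hdz
      rw [hdv] at hdz
      have hdzt : deriv z t = deriv β₁ t := by simpa [sub_eq_zero] using hdz
      have hgt : upShift T β₁ t < z t := by simpa [sub_pos] using hpos
      have heq := heqz t ht
      rw [trunc_of_gt hgt] at heq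
      simp only [one_mul] at heq
      have hWle : trunc (lowShift T α₂) (upShift T β₂) t (w t) ≤ upShift T β₂ t :=
        trunc_le _ (hord₂ t ht)
      have hbnd := mem_bounds_of_cont (T := T) hβ₁2.continuous ht
      have hmin : min (sInf (deriv α₁ '' Set.Icc 0 T)) (sInf (deriv β₁ '' Set.Icc 0 T)) ≤
          deriv z t := by
        rw [hdzt]; exact le_trans (min_le_right _ _) hbnd.1
      have hmax' : deriv z t ≤
          max (sSup (deriv α₁ '' Set.Icc 0 T)) (sSup (deriv β₁ '' Set.Icc 0 T)) := by
        rw [hdzt]; exact le_trans hbnd.2 (le_max_right _ _)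
      have hmono := hfmono t ht (upShift T β₁ t) (deriv z t) (deriv w t) hmin hmax'
        (trunc (lowShift T α₂) (upShift T β₂) t (w t)) (upShift T β₂ t) hWle
      have hup := huf t ht (deriv w t)
      rw [← hdzt] at hup
      rw [hddv t]
      simp only
      linarith
    have key := maxPrinciple hT hvC hper1 hper2 hin
    intro t ht
    linarith [key t ht]
  -- Bound 2 : α₁⁰ ≤ z
  have hlb₁ : ∀ t ∈ Set.Icc 0 T, lowShift T α₁ t ≤ z t := by
    have hvC : ContDiff ℝ 2 (fun t => lowShift T α₁ t - z t) :=
      (show ContDiff ℝ 2 fun t => α₁ t - supNorm T α₁ from hα₁C.sub contDiff_const).sub hzC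
    have hdv : deriv (fun t => lowShift T α₁ t - z t) = fun t => deriv α₁ t - deriv z t := by
      funext t
      rw [show (fun t => lowShift T α₁ t - z t) = fun t => (α₁ t - supNorm T α₁) - z t from rfl,
        deriv_fun_sub ((hα₁1 t).sub_const _) (hz1 t), deriv_sub_const]
    have hddv : ∀ t, deriv (deriv (fun t => lowShift T α₁ t - z t)) t =
        deriv (deriv α₁) t - deriv (deriv z) t := by
      intro t
      rw [hdv, deriv_fun_sub (hα₁2 t) (hz2 t)]
    have hper1 : (fun t => lowShift T α₁ t - z t) 0 = (fun t => lowShift T α₁ t - z t) T := by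
      simp only [lowShift]; rw [hz0, hα₁per]
    have hper2 : deriv (fun t => lowShift T α₁ t - z t) T ≤
        deriv (fun t => lowShift T α₁ t - z t) 0 := by
      rw [hdv]; simp only; linarith
    have hin : ∀ t ∈ Set.Icc 0 T, 0 < (fun t => lowShift T α₁ t - z t) t →
        deriv (fun t => lowShift T α₁ t - z t) t = 0 →
        (fun t => lowShift T α₁ t - z t) t ≤
          deriv (deriv (fun t => lowShift T α₁ t - z t)) t := by
      intro t ht hpos hdz
      rw [hdv] at hdz
      have hdzt : deriv z t = deriv α₁ t := by
        have := hdz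
        simp only [sub_eq_zero] at this
        exact this.symm
      have hlt : z t < lowShift T α₁ t := by simpa [sub_pos] using hpos
      have heq := heqz t ht
      rw [trunc_of_lt (hord₁ t ht) hlt] at heq
      simp only [one_mul] at heq
      have hWge : lowShift T α₂ t ≤ trunc (lowShift T α₂) (upShift T β₂) t (w t) :=
        le_trunc _ (hord₂ t ht)
      have hbnd := mem_bounds_of_cont (T := T) hα₁2.continuous ht
      have hmin : min (sInf (deriv α₁ '' Set.Icc 0 T)) (sInf (deriv β₁ '' Set.Icc 0 T)) ≤
          deriv z t := by
        rw [hdzt]; exact le_trans (min_le_left _ _) hbnd.1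
      have hmax' : deriv z t ≤
          max (sSup (deriv α₁ '' Set.Icc 0 T)) (sSup (deriv β₁ '' Set.Icc 0 T)) := by
        rw [hdzt]; exact le_trans hbnd.2 (le_max_left _ _)
      have hmono := hfmono t ht (lowShift T α₁ t) (deriv z t) (deriv w t) hmin hmax'
        (lowShift T α₂ t) (trunc (lowShift T α₂) (upShift T β₂) t (w t)) hWge
      have hlo := hlf t ht (deriv w t)
      rw [← hdzt] at hlo
      rw [hddv t]
      simp only
      linarith
    have key := maxPrinciple hT hvC hper1 hper2 hin
    intro t ht
    linarith [key t ht]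
  -- Bound 3 : w ≤ β₂⁰
  have hub₂ : ∀ t ∈ Set.Icc 0 T, w t ≤ upShift T β₂ t := by
    have hvC : ContDiff ℝ 2 (fun t => w t - upShift T β₂ t) :=
      hwC.sub (show ContDiff ℝ 2 fun t => β₂ t + supNorm T β₂ from hβ₂C.add contDiff_const)
    have hdv : deriv (fun t => w t - upShift T β₂ t) = fun t => deriv w t - deriv β₂ t := by
      funext t
      rw [show (fun t => w t - upShift T β₂ t) = fun t => w t - (β₂ t + supNorm T β₂) from rfl,
        deriv_fun_sub (hw1 t) ((hβ₂1 t).add_const _), deriv_add_const]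
    have hddv : ∀ t, deriv (deriv (fun t => w t - upShift T β₂ t)) t =
        deriv (deriv w) t - deriv (deriv β₂) t := by
      intro t
      rw [hdv, deriv_fun_sub (hw2 t) (hβ₂2 t)]
    have hper1 : (fun t => w t - upShift T β₂ t) 0 = (fun t => w t - upShift T β₂ t) T := by
      simp only [upShift]; rw [hw0, hβ₂per]
    have hper2 : deriv (fun t => w t - upShift T β₂ t) T ≤
        deriv (fun t => w t - upShift T β₂ t) 0 := by
      rw [hdv]; simp only; linarith
    have hin : ∀ t ∈ Set.Icc 0 T, 0 < (fun t => w t - upShift T β₂ t) t →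
        deriv (fun t => w t - upShift T β₂ t) t = 0 →
        (fun t => w t - upShift T β₂ t) t ≤
          deriv (deriv (fun t => w t - upShift T β₂ t)) t := by
      intro t ht hpos hdw
      rw [hdv] at hdw
      have hdwt : deriv w t = deriv β₂ t := by simpa [sub_eq_zero] using hdw
      have hgt : upShift T β₂ t < w t := by simpa [sub_pos] using hpos
      have heq := heqw t ht
      rw [trunc_of_gt hgt] at heq
      simp only [one_mul] at heq
      have hZle : trunc (lowShift T α₁) (upShift T β₁) t (z t) ≤ upShift T β₁ t :=
        trunc_le _ (hord₁ t ht)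
      have hbnd := mem_bounds_of_cont (T := T) hβ₂2.continuous ht
      have hmin : min (sInf (deriv α₂ '' Set.Icc 0 T)) (sInf (deriv β₂ '' Set.Icc 0 T)) ≤
          deriv w t := by
        rw [hdwt]; exact le_trans (min_le_right _ _) hbnd.1
      have hmax' : deriv w t ≤
          max (sSup (deriv α₂ '' Set.Icc 0 T)) (sSup (deriv β₂ '' Set.Icc 0 T)) := by
        rw [hdwt]; exact le_trans hbnd.2 (le_max_right _ _)
      have hmono := hgmono t ht (upShift T β₂ t) (deriv z t) (deriv w t) hmin hmax'
        (trunc (lowShift T α₁) (upShift T β₁) t (z t)) (upShift T β₁ t) hZle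
      have hup := hug t ht (deriv z t)
      rw [← hdwt] at hup
      rw [hddv t]
      simp only
      linarith
    have key := maxPrinciple hT hvC hper1 hper2 hin
    intro t ht
    linarith [key t ht]
  -- Bound 4 : α₂⁰ ≤ w
  have hlb₂ : ∀ t ∈ Set.Icc 0 T, lowShift T α₂ t ≤ w t := by
    have hvC : ContDiff ℝ 2 (fun t => lowShift T α₂ t - w t) :=
      (show ContDiff ℝ 2 fun t => α₂ t - supNorm T α₂ from hα₂C.sub contDiff_const).sub hwC
    have hdv : deriv (fun t => lowShift T α₂ t - w t) = fun t => deriv α₂ t - deriv w t := by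
      funext t
      rw [show (fun t => lowShift T α₂ t - w t) = fun t => (α₂ t - supNorm T α₂) - w t from rfl,
        deriv_fun_sub ((hα₂1 t).sub_const _) (hw1 t), deriv_sub_const]
    have hddv : ∀ t, deriv (deriv (fun t => lowShift T α₂ t - w t)) t =
        deriv (deriv α₂) t - deriv (deriv w) t := by
      intro t
      rw [hdv, deriv_fun_sub (hα₂2 t) (hw2 t)]
    have hper1 : (fun t => lowShift T α₂ t - w t) 0 = (fun t => lowShift T α₂ t - w t) T := by
      simp only [lowShift]; rw [hw0, hα₂per]
    have hper2 : deriv (fun t => lowShift T α₂ t - w t) T ≤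
        deriv (fun t => lowShift T α₂ t - w t) 0 := by
      rw [hdv]; simp only; linarith
    have hin : ∀ t ∈ Set.Icc 0 T, 0 < (fun t => lowShift T α₂ t - w t) t →
        deriv (fun t => lowShift T α₂ t - w t) t = 0 →
        (fun t => lowShift T α₂ t - w t) t ≤
          deriv (deriv (fun t => lowShift T α₂ t - w t)) t := by
      intro t ht hpos hdw
      rw [hdv] at hdw
      have hdwt : deriv w t = deriv α₂ t := by
        have := hdw
        simp only [sub_eq_zero] at this
        exact this.symm
      have hlt : w t < lowShift T α₂ t := by simpa [sub_pos] using hpos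
      have heq := heqw t ht
      rw [trunc_of_lt (hord₂ t ht) hlt] at heq
      simp only [one_mul] at heq
      have hZge : lowShift T α₁ t ≤ trunc (lowShift T α₁) (upShift T β₁) t (z t) :=
        le_trunc _ (hord₁ t ht)
      have hbnd := mem_bounds_of_cont (T := T) hα₂2.continuous ht
      have hmin : min (sInf (deriv α₂ '' Set.Icc 0 T)) (sInf (deriv β₂ '' Set.Icc 0 T)) ≤
          deriv w t := by
        rw [hdwt]; exact le_trans (min_le_left _ _) hbnd.1
      have hmax' : deriv w t ≤
          max (sSup (deriv α₂ '' Set.Icc 0 T)) (sSup (deriv β₂ '' Set.Icc 0 T)) := by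
        rw [hdwt]; exact le_trans hbnd.2 (le_max_left _ _)
      have hmono := hgmono t ht (lowShift T α₂ t) (deriv z t) (deriv w t) hmin hmax'
        (lowShift T α₁ t) (trunc (lowShift T α₁) (upShift T β₁) t (z t)) hZge
      have hlo := hlg t ht (deriv z t)
      rw [← hdwt] at hlo
      rw [hddv t]
      simp only
      linarith
    have key := maxPrinciple hT hvC hper1 hper2 hin
    intro t ht
    linarith [key t ht]
  refine ⟨fun t ht => ⟨hlb₁ t ht, hub₁ t ht, hlb₂ t ht, hub₂ t ht⟩, ?_, ?_⟩
  · intro t ht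
    have heq := heqz t ht
    rw [trunc_of_mem (hlb₁ t ht) (hub₁ t ht), trunc_of_mem (hlb₂ t ht) (hub₂ t ht)] at heq
    simp only [one_mul] at heq
    linarith
  · intro t ht
    have heq := heqw t ht
    rw [trunc_of_mem (hlb₁ t ht) (hub₁ t ht), trunc_of_mem (hlb₂ t ht) (hub₂ t ht)] at heq
    simp only [one_mul] at heq
    linarith
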